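/- arXiv:1808.01678 — 4 statements merged into one kernel-verified Lean document; each statement's English description precedes it below -/
import Mathlib

section
/- Let n = 4 and let φ : ℤ → ℂ be the indicator of {0}. Then for every k ≥ 1, A_*[φ,φ,φ,φ](2^k) = 1/24; consequently, for every 1 ≤ q < ∞ the function A_*[φ,φ,φ,φ] does not belong to ℓ^q(ℤ). -/
open scoped BigOperators ENNReal NNReal
open MeasureTheory Finset

noncomputable section

/-- `sphereCount n lam` is the number of lattice points `x ∈ ℤ^n` with
`x₁² + ⋯ + x_n² = lam`. -/
def sphereCount (n lam : ℕ) : ℕ :=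
  {x : Fin n → ℤ | ∑ i, (x i) ^ 2 = (lam : ℤ)}.ncard

/-- The multilinear spherical average
`A_lam[f₁,…,f_n](y) = (1/r_n(lam)) ∑_{|x|² = lam} f₁(y-x₁)⋯f_n(y-x_n)`. -/
def mulAvg (n lam : ℕ) (f : Fin n → ℤ → ℂ) (y : ℤ) : ℂ :=
  (sphereCount n lam : ℂ)⁻¹ *
    ∑ᶠ x ∈ {x : Fin n → ℤ | ∑ i, (x i) ^ 2 = (lam : ℤ)}, ∏ i, f i (y - x i)

/-- The maximal function `A_*[f₁,…,f_n](y) = sup_{lam ≥ 1} |A_lam[f₁,…,f_n](y)|`. -/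
def maxFn (n : ℕ) (f : Fin n → ℤ → ℂ) (y : ℤ) : ℝ≥0∞ :=
  ⨆ (lam : ℕ) (_ : 1 ≤ lam), (‖mulAvg n lam f y‖₊ : ℝ≥0∞)

/-- The `ℓ^p(ℤ)` norm of a complex-valued function, valued in `ℝ≥0∞`. -/
def lpNorm (p : ℝ) (g : ℤ → ℂ) : ℝ≥0∞ :=
  (∑' x : ℤ, (‖g x‖₊ : ℝ≥0∞) ^ p) ^ (1 / p)

/-- The `ℓ^q(ℤ)` norm of an `ℝ≥0∞`-valued function. -/
def lqNormE (q : ℝ) (g : ℤ → ℝ≥0∞) : ℝ≥0∞ :=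
  (∑' x : ℤ, g x ^ q) ^ (1 / q)

/-! ### Auxiliary lemmas -/

set_option maxRecDepth 10000 in
lemma aux_zmod8_even : ∀ a b c d : ZMod 8, a^2+b^2+c^2+d^2 = 0 →
    a^4 = 0 ∧ b^4 = 0 ∧ c^4 = 0 ∧ d^4 = 0 := by decide

lemma aux_even_of_sphere {m : ℕ} (hm : 2 ≤ m) {x : Fin 4 → ℤ}
    (hx : ∑ i, (x i)^2 = (4:ℤ)^m) (i : Fin 4) : (2:ℤ) ∣ x i := by
  have h8 : (8:ℤ) ∣ (4:ℤ)^m := dvd_trans (by norm_num) (pow_dvd_pow 4 hm)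
  have hz : ∑ j, ((x j : ZMod 8))^2 = 0 := by
    have h1 := congrArg (fun t : ℤ => (t : ZMod 8)) hx
    push_cast at h1
    rw [h1]
    exact_mod_cast (ZMod.intCast_zmod_eq_zero_iff_dvd ((4:ℤ)^m) 8).2 (by exact_mod_cast h8)
  rw [Fin.sum_univ_four] at hz
  have h4 : ((x i : ZMod 8))^4 = 0 := by
    obtain ⟨h0, h1, h2, h3⟩ := aux_zmod8_even _ _ _ _ hz
    fin_cases i <;> assumption
  have hd : (8:ℤ) ∣ (x i)^4 := by
    have : (((x i)^4 : ℤ) : ZMod 8) = 0 := by push_cast; exact h4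
    exact_mod_cast (ZMod.intCast_zmod_eq_zero_iff_dvd _ 8).1 this
  exact Int.Prime.dvd_pow' (by norm_num) (dvd_trans (by norm_num) hd)

lemma aux_sphere_step {m : ℕ} (hm : 1 ≤ m) :
    sphereCount 4 (4^(m+1)) = sphereCount 4 (4^m) := by
  unfold sphereCount
  have himg : {x : Fin 4 → ℤ | ∑ i, (x i)^2 = ((4^(m+1):ℕ) : ℤ)} =
      (fun y : Fin 4 → ℤ => fun i => 2 * y i) '' {y : Fin 4 → ℤ | ∑ i, (y i)^2 = ((4^m:ℕ):ℤ)} := by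
    ext x
    simp only [Set.mem_setOf_eq, Set.mem_image]
    constructor
    · intro hx
      have hx' : ∑ i, (x i)^2 = (4:ℤ)^(m+1) := by push_cast at hx ⊢; exact hx
      have hev := aux_even_of_sphere (by omega) hx'
      choose y hy using hev
      refine ⟨y, ?_, funext fun i => (hy i).symm⟩
      have hsum : ∑ i, (2 * y i)^2 = (4:ℤ)^(m+1) := by
        rw [← hx']; exact Finset.sum_congr rfl fun i _ => by rw [← hy i]
      have h4 : (4:ℤ) * ∑ i, (y i)^2 = 4 * 4^m := by
        rw [Finset.mul_sum]
        calc ∑ i, 4 * (y i)^2 = ∑ i, (2 * y i)^2 := by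
              exact Finset.sum_congr rfl fun i _ => by ring
          _ = (4:ℤ)^(m+1) := hsum
          _ = 4 * 4^m := by ring
      have := mul_left_cancel₀ (by norm_num : (4:ℤ) ≠ 0) h4
      push_cast
      exact this
    · rintro ⟨y, hy, rfl⟩
      push_cast at hy ⊢
      calc ∑ i, (2 * y i)^2 = 4 * ∑ i, (y i)^2 := by
            rw [Finset.mul_sum]; exact Finset.sum_congr rfl fun i _ => by ring
        _ = (4:ℤ)^(m+1) := by rw [hy]; ring
  rw [himg, Set.ncard_image_of_injective]
  intro a b h
  funext i
  have := congrFun h i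
  simp only at this
  omega

lemma aux_sphere4 : sphereCount 4 4 = 24 := by
  unfold sphereCount
  have hset : {x : Fin 4 → ℤ | ∑ i, (x i)^2 = ((4:ℕ):ℤ)} =
      ↑((Fintype.piFinset (fun _ : Fin 4 => Finset.Icc (-2:ℤ) 2)).filter
        (fun x => ∑ i, (x i)^2 = 4)) := by
    ext x
    simp only [Finset.coe_filter, Set.mem_setOf_eq, Fintype.mem_piFinset, Finset.mem_Icc]
    constructor
    · intro h
      have h' : ∑ i, (x i)^2 = (4:ℤ) := by exact_mod_cast h
      refine ⟨fun i => ?_, h'⟩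
      have h1 : x i ^ 2 ≤ 4 := by
        have h2 : x i ^ 2 ≤ ∑ j, x j ^ 2 := by
          simpa using Finset.single_le_sum (f := fun i => x i ^ 2)
            (fun i _ => sq_nonneg (x i)) (Finset.mem_univ i)
        omega
      constructor <;> nlinarith
    · exact fun h => by exact_mod_cast h.2
  rw [hset, Set.ncard_coe_finset]
  decide

lemma aux_sphere_pow {m : ℕ} (hm : 1 ≤ m) : sphereCount 4 (4^m) = 24 := by
  induction m with
  | zero => omega
  | succ k ih =>
    rcases Nat.eq_or_lt_of_le hm with h | h
    · rw [← h]; simpa using aux_sphere4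
    · rw [aux_sphere_step (by omega)]; exact ih (by omega)

lemma aux_mulAvg_delta (lam : ℕ) (y : ℤ) :
    mulAvg 4 lam (fun _ x => if x = 0 then (1 : ℂ) else 0) y =
      if (lam : ℤ) = 4 * y ^ 2 then (sphereCount 4 lam : ℂ)⁻¹ else 0 := by
  unfold mulAvg
  have hprod : ∀ x ∈ {x : Fin 4 → ℤ | ∑ i, (x i) ^ 2 = (lam : ℤ)},
      (∏ i, (fun (_ : Fin 4) (x : ℤ) => if x = 0 then (1 : ℂ) else 0) i (y - x i)) =
      if x = (fun _ => y) then 1 else 0 := by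
    intro x _
    by_cases h : x = fun _ => y
    · subst h; simp
    · rw [if_neg h]
      obtain ⟨i, hi⟩ : ∃ i, x i ≠ y := by
        by_contra hc; push_neg at hc; exact h (funext hc)
      refine Finset.prod_eq_zero (Finset.mem_univ i) ?_
      simp only [ite_eq_right_iff, one_ne_zero, imp_false]
      omega
  rw [finsum_mem_congr rfl hprod]
  rw [finsum_mem_def]
  rw [finsum_eq_single _ (fun _ => y)
    (fun x hx => by simp [Set.indicator_apply, if_neg hx])]
  by_cases hmem : (fun _ : Fin 4 => y) ∈ {x : Fin 4 → ℤ | ∑ i, (x i) ^ 2 = (lam : ℤ)}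
  · have hc : (lam : ℤ) = 4 * y ^ 2 := by
      have := hmem
      simp only [Set.mem_setOf_eq, Finset.sum_const, Finset.card_univ, Fintype.card_fin,
        nsmul_eq_mul, Nat.cast_ofNat] at this
      omega
    rw [if_pos hc]
    simp [Set.indicator_apply, hmem]
  · have hc : ¬ ((lam : ℤ) = 4 * y ^ 2) := by
      intro h
      exact hmem (by simp only [Set.mem_setOf_eq, Finset.sum_const, Finset.card_univ,
        Fintype.card_fin, nsmul_eq_mul, Nat.cast_ofNat]; omega)
    rw [if_neg hc]
    simp [Set.indicator_apply, hmem]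

lemma aux_maxFn_pow (k : ℕ) (hk : 1 ≤ k) :
    maxFn 4 (fun _ x => if x = 0 then (1 : ℂ) else 0) ((2 : ℤ) ^ k) = (24 : ℝ≥0∞)⁻¹ := by
  have key : ∀ lam : ℕ,
      (‖mulAvg 4 lam (fun _ x => if x = 0 then (1 : ℂ) else 0) ((2:ℤ)^k)‖₊ : ℝ≥0∞)
      = if lam = 4^(k+1) then (24 : ℝ≥0∞)⁻¹ else 0 := by
    intro lam
    rw [aux_mulAvg_delta]
    have hpow : ((4:ℕ)^(k+1) : ℤ) = 4 * ((2:ℤ)^k) ^ 2 := by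
      push_cast
      rw [show (4:ℤ) = 2^2 by norm_num, ← pow_mul, ← pow_mul]
      ring
    have hiff : (lam : ℤ) = 4 * ((2:ℤ)^k) ^ 2 ↔ lam = 4^(k+1) := by
      rw [← hpow]
      exact_mod_cast Iff.rfl
    by_cases h : lam = 4^(k+1)
    · rw [if_pos (hiff.2 h), if_pos h, h, aux_sphere_pow (by omega)]
      have : ‖((24 : ℕ) : ℂ)⁻¹‖₊ = (24 : ℝ≥0)⁻¹ := by
        rw [nnnorm_inv]; norm_cast
      rw [this]
      simp [ENNReal.coe_inv]
    · rw [if_neg (fun hh => h (hiff.1 hh)), if_neg h]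
      simp
  unfold maxFn
  apply le_antisymm
  · refine iSup₂_le fun lam _ => ?_
    rw [key lam]
    split <;> simp
  · have h1 : (1:ℕ) ≤ 4^(k+1) := Nat.one_le_pow _ _ (by norm_num)
    refine le_trans ?_ (le_iSup₂ (4^(k+1)) h1)
    rw [key (4^(k+1)), if_pos rfl]

/-- For `n = 4` and `phi` the unit mass at the origin,
`A_*[phi,phi,phi,phi](2^k) = 1/24` for every `k ≥ 1`, and consequently
`A_*[phi,phi,phi,phi]` does not belong to `ℓ^q(ℤ)` for any `1 ≤ q < ∞`. -/
theorem statement5 :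
    (∀ k : ℕ, 1 ≤ k →
      maxFn 4 (fun _ x => if x = 0 then (1 : ℂ) else 0) ((2 : ℤ) ^ k) = (24 : ℝ≥0∞)⁻¹) ∧
    (∀ q : ℝ, 1 ≤ q →
      ∑' y : ℤ, maxFn 4 (fun _ x => if x = 0 then (1 : ℂ) else 0) y ^ q = ∞) := by
  constructor
  · exact aux_maxFn_pow
  · intro q hq
    have hc : ((24 : ℝ≥0∞)⁻¹) ^ q ≠ 0 := by
      have : (0:ℝ≥0∞) < ((24 : ℝ≥0∞)⁻¹) ^ q :=
        ENNReal.rpow_pos (ENNReal.inv_pos.mpr (by norm_num)) (by simp)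
      exact this.ne'
    have hinj : Function.Injective (fun k : ℕ => (2:ℤ)^(k+1)) := by
      intro a b h
      simp only at h
      have h2 := congrArg Int.natAbs h
      simp only [Int.natAbs_pow] at h2
      have h3 : (2:ℕ)^(a+1) = 2^(b+1) := by simpa using h2
      have := Nat.pow_right_injective (le_refl 2) h3
      omega
    refine top_le_iff.1 ?_
    calc (⊤ : ℝ≥0∞) = ∑' _ : ℕ, ((24 : ℝ≥0∞)⁻¹) ^ q :=
          (ENNReal.tsum_const_eq_top_of_ne_zero hc).symm
      _ = ∑' k : ℕ, maxFn 4 (fun _ x => if x = 0 then (1 : ℂ) else 0) ((2:ℤ)^(k+1)) ^ q := by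
          refine tsum_congr fun k => ?_
          rw [aux_maxFn_pow (k+1) (by omega)]
      _ ≤ ∑' y : ℤ, maxFn 4 (fun _ x => if x = 0 then (1 : ℂ) else 0) y ^ q :=
          ENNReal.tsum_comp_le_tsum_of_injective hinj _
end
end

section
/- Let n ≥ 4, 1 ≤ q < ∞ and 1 ≤ p < ∞ with p > nq. Then there is no constant C such that ‖A_*[f₁,…,f_n]‖_{ℓ^q(ℤ)} ≤ C ∏_{i=1}^n ‖f_i‖_{ℓ^p(ℤ)} holds for all f₁,…,f_n ∈ ℓ^p(ℤ). -/
open scoped BigOperators ENNReal NNReal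
open MeasureTheory Finset

noncomputable section

lemma sphere1_mem_bound {n : ℕ} {x : Fin n → ℤ}
    (hx : ∑ i, (x i) ^ 2 = (1 : ℤ)) (i : Fin n) : -1 ≤ x i ∧ x i ≤ 1 := by
  have h1 : (x i) ^ 2 ≤ 1 := hx ▸ Finset.single_le_sum (f := fun j => (x j) ^ 2)
      (fun j _ => sq_nonneg _) (Finset.mem_univ i)
  constructor <;> nlinarith [sq_nonneg (x i - 1), sq_nonneg (x i + 1)]

lemma sphere1_finite (n : ℕ) : {x : Fin n → ℤ | ∑ i, (x i) ^ 2 = (1 : ℤ)}.Finite := by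
  apply Set.Finite.subset (Set.Finite.pi (fun i : Fin n => Set.finite_Icc (-1 : ℤ) 1))
  intro x hx
  simp only [Set.mem_pi, Set.mem_univ, Set.mem_Icc, forall_true_left]
  intro i
  exact sphere1_mem_bound hx i

lemma sphereCount1_pos (n : ℕ) (hn : 0 < n) : 0 < sphereCount n 1 := by
  rw [sphereCount]
  refine (Set.ncard_pos (sphere1_finite n)).mpr ?_
  refine ⟨fun i : Fin n => if i = ⟨0, hn⟩ then (1 : ℤ) else 0, ?_⟩
  simp only [Set.mem_setOf_eq]
  have h : ∀ i : Fin n, (if i = ⟨0, hn⟩ then (1 : ℤ) else 0) ^ 2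
      = if i = ⟨0, hn⟩ then (1 : ℤ) else 0 := by
    intro i; split <;> ring
  rw [Finset.sum_congr rfl (fun i _ => h i),
    Finset.sum_ite_eq' Finset.univ (⟨0, hn⟩ : Fin n) (fun _ => (1 : ℤ))]
  simp

/-- For `n ≥ 4`, `1 ≤ q < ∞`, `1 ≤ p < ∞` with `p > n q`, there is no
constant `C` with `‖A_*[f₁,…,f_n]‖_{ℓ^q} ≤ C ∏ ‖f_i‖_{ℓ^p}` for all `f_i ∈ ℓ^p`. -/
theorem statement7 (n : ℕ) (hn : 4 ≤ n) (p q : ℝ) (hp : 1 ≤ p) (hq : 1 ≤ q)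
    (hpq : (n : ℝ) * q < p) :
    ¬ ∃ C : ℝ≥0, ∀ f : Fin n → ℤ → ℂ, (∀ i, lpNorm p (f i) ≠ ∞) →
      lqNormE q (maxFn n f) ≤ (C : ℝ≥0∞) * ∏ i, lpNorm p (f i) := by
  rintro ⟨C, hC⟩
  have hn0 : 0 < n := by omega
  have hp0 : (0 : ℝ) < p := by linarith
  have hq0 : (0 : ℝ) < q := by linarith
  set a : ℝ := 1 / q - (n : ℝ) / p with ha
  have ha0 : 0 < a := by
    rw [ha, sub_pos, div_lt_div_iff₀ hp0 hq0]
    linarith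
  -- choose a large natural number N
  have hKfin : ((C : ℝ≥0∞) * (3 : ℝ≥0∞) ^ ((n : ℝ) / p)) ^ (1 / a) ≠ ∞ := by
    apply ENNReal.rpow_ne_top_of_nonneg (by positivity)
    exact ENNReal.mul_ne_top ENNReal.coe_ne_top
      (ENNReal.rpow_ne_top_of_nonneg (by positivity) (by simp))
  obtain ⟨M, hM⟩ := ENNReal.exists_nat_gt hKfin
  set N : ℕ := M + 1 with hN
  have hN1 : (1 : ℝ≥0∞) ≤ (N : ℝ≥0∞) := by
    simp [hN]
  have hNlt : ((C : ℝ≥0∞) * (3 : ℝ≥0∞) ^ ((n : ℝ) / p)) ^ (1 / a) < (N : ℝ≥0∞) := by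
    refine hM.trans_le ?_
    exact_mod_cast Nat.cast_le.mpr (Nat.le_succ M)
  have hkey : (C : ℝ≥0∞) * (3 : ℝ≥0∞) ^ ((n : ℝ) / p) < (N : ℝ≥0∞) ^ a := by
    have := ENNReal.rpow_lt_rpow hNlt ha0
    rwa [← ENNReal.rpow_mul, one_div_mul_cancel ha0.ne', ENNReal.rpow_one] at this
  -- the counterexample functions
  set f : Fin n → ℤ → ℂ := fun _ x => if 0 ≤ x ∧ x ≤ (N : ℤ) + 1 then 1 else 0 with hf
  -- the ℓ^p norm of each f i
  have hlp : ∀ i : Fin n, lpNorm p (f i) = ((N : ℝ≥0∞) + 2) ^ (1 / p) := by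
    intro i
    unfold _root_.lpNorm
    congr 1
    have hterm : ∀ x : ℤ, ((‖f i x‖₊ : ℝ≥0∞)) ^ p
        = if 0 ≤ x ∧ x ≤ (N : ℤ) + 1 then 1 else 0 := by
      intro x
      by_cases hx : 0 ≤ x ∧ x ≤ (N : ℤ) + 1
      · simp [hf, hx, ENNReal.one_rpow]
      · simp [hf, hx, ENNReal.zero_rpow_of_pos hp0]
    rw [tsum_congr hterm]
    rw [tsum_eq_sum (s := Finset.Icc (0 : ℤ) ((N : ℤ) + 1)) (by
      intro b hb
      simp only [Finset.mem_Icc] at hb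
      simp only [ite_eq_right_iff, one_ne_zero]
      intro h; exact absurd h hb)]
    have hone : ∀ x ∈ Finset.Icc (0 : ℤ) ((N : ℤ) + 1),
        (if 0 ≤ x ∧ x ≤ (N : ℤ) + 1 then (1 : ℝ≥0∞) else 0) = 1 := by
      intro x hx
      simp only [Finset.mem_Icc] at hx
      simp [hx]
    have hcard : (Finset.Icc (0 : ℤ) ((N : ℤ) + 1)).card = N + 2 := by
      rw [Int.card_Icc]; omega
    rw [Finset.sum_congr rfl hone, Finset.sum_const, hcard, nsmul_eq_mul, mul_one]
    push_cast
    ring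
  -- lower bound for the maximal function on [1, N]
  have hmax : ∀ y : ℤ, y ∈ Finset.Icc (1 : ℤ) (N : ℤ) → (1 : ℝ≥0∞) ≤ maxFn n f y := by
    intro y hy
    simp only [Finset.mem_Icc] at hy
    have havg : mulAvg n 1 f y = 1 := by
      rw [mulAvg]
      have hsum : ∑ᶠ x ∈ {x : Fin n → ℤ | ∑ i, (x i) ^ 2 = ((1 : ℕ) : ℤ)},
          ∏ i, f i (y - x i) = (sphereCount n 1 : ℂ) := by
        rw [finsum_mem_eq_finite_toFinset_sum _ (by exact_mod_cast sphere1_finite n)]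
        have hone : ∀ x ∈ Set.Finite.toFinset (show ({x : Fin n → ℤ | ∑ i, (x i) ^ 2
            = ((1 : ℕ) : ℤ)}).Finite by exact_mod_cast sphere1_finite n),
            ∏ i, f i (y - x i) = 1 := by
          intro x hx
          rw [Set.Finite.mem_toFinset] at hx
          simp only [Set.mem_setOf_eq] at hx
          refine Finset.prod_eq_one (fun i _ => ?_)
          obtain ⟨hl, hr⟩ := sphere1_mem_bound (by exact_mod_cast hx) i
          have : 0 ≤ y - x i ∧ y - x i ≤ (N : ℤ) + 1 := by omega
          simp [hf, this, show x i ≤ y by omega]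
        rw [Finset.sum_congr rfl hone, Finset.sum_const, nsmul_eq_mul, mul_one]
        rw [sphereCount, Set.ncard_eq_toFinset_card _ (by exact_mod_cast sphere1_finite n)]
      rw [hsum]
      have hr0 : (sphereCount n 1 : ℂ) ≠ 0 := by
        exact_mod_cast Nat.cast_ne_zero.mpr (sphereCount1_pos n hn0).ne'
      exact inv_mul_cancel₀ hr0
    have h1 : (1 : ℝ≥0∞) ≤ (‖mulAvg n 1 f y‖₊ : ℝ≥0∞) := by
      rw [havg]; simp
    refine h1.trans ?_
    exact le_iSup₂ (f := fun (lam : ℕ) (_ : 1 ≤ lam) => (‖mulAvg n lam f y‖₊ : ℝ≥0∞)) 1 le_rfl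
  -- lower bound for the ℓ^q norm
  have hlq : ((N : ℝ≥0∞)) ^ (1 / q) ≤ lqNormE q (maxFn n f) := by
    rw [lqNormE]
    refine ENNReal.rpow_le_rpow ?_ (by positivity)
    calc (N : ℝ≥0∞) = ∑ y ∈ Finset.Icc (1 : ℤ) (N : ℤ), 1 := by
          have hcard2 : (Finset.Icc (1 : ℤ) (N : ℤ)).card = N := by
            rw [Int.card_Icc]; omega
          rw [Finset.sum_const, hcard2, nsmul_eq_mul, mul_one]
      _ ≤ ∑ y ∈ Finset.Icc (1 : ℤ) (N : ℤ), maxFn n f y ^ q := by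
          refine Finset.sum_le_sum (fun y hy => ?_)
          calc (1 : ℝ≥0∞) = 1 ^ q := (ENNReal.one_rpow q).symm
            _ ≤ maxFn n f y ^ q := ENNReal.rpow_le_rpow (hmax y hy) hq0.le
      _ ≤ ∑' y : ℤ, maxFn n f y ^ q := ENNReal.sum_le_tsum _
  -- the hypothesis applied
  have hineq := hC f (fun i => by
    rw [hlp i]
    exact ENNReal.rpow_ne_top_of_nonneg (by positivity) (by simp))
  rw [Finset.prod_congr rfl (fun i _ => hlp i), Finset.prod_const, Finset.card_univ,
    Fintype.card_fin] at hineq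
  have hNne : (N : ℝ≥0∞) ≠ 0 := by
    intro h; rw [h] at hN1; simp at hN1
  have hNtop : (N : ℝ≥0∞) ≠ ∞ := ENNReal.natCast_ne_top N
  -- upper bound the RHS
  have hub : (C : ℝ≥0∞) * (((N : ℝ≥0∞) + 2) ^ (1 / p)) ^ n
      < (N : ℝ≥0∞) ^ (1 / q) := by
    have h32 : ((N : ℝ≥0∞) + 2) ≤ 3 * (N : ℝ≥0∞) := by
      calc (N : ℝ≥0∞) + 2 ≤ (N : ℝ≥0∞) + 2 * (N : ℝ≥0∞) := by
            gcongr
            calc (2 : ℝ≥0∞) = 2 * 1 := (mul_one 2).symm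
              _ ≤ 2 * (N : ℝ≥0∞) := by gcongr
        _ = 3 * (N : ℝ≥0∞) := by ring
    have hpow : (((N : ℝ≥0∞) + 2) ^ (1 / p)) ^ n = ((N : ℝ≥0∞) + 2) ^ ((n : ℝ) / p) := by
      rw [← ENNReal.rpow_natCast (((N : ℝ≥0∞) + 2) ^ (1 / p)) n, ← ENNReal.rpow_mul]
      congr 1
      field_simp
    rw [hpow]
    calc (C : ℝ≥0∞) * ((N : ℝ≥0∞) + 2) ^ ((n : ℝ) / p)
        ≤ (C : ℝ≥0∞) * ((3 : ℝ≥0∞) ^ ((n : ℝ) / p) * (N : ℝ≥0∞) ^ ((n : ℝ) / p)) := by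
          gcongr
          rw [← ENNReal.mul_rpow_of_nonneg _ _ (by positivity)]
          exact ENNReal.rpow_le_rpow h32 (by positivity)
      _ = ((C : ℝ≥0∞) * (3 : ℝ≥0∞) ^ ((n : ℝ) / p)) * (N : ℝ≥0∞) ^ ((n : ℝ) / p) := by
          ring
      _ < (N : ℝ≥0∞) ^ a * (N : ℝ≥0∞) ^ ((n : ℝ) / p) := by
          refine ENNReal.mul_lt_mul_left ?_ ?_ hkey
          · exact (ENNReal.rpow_pos (by positivity) hNtop).ne'
          · exact ENNReal.rpow_ne_top_of_nonneg (by positivity) hNtop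
      _ = (N : ℝ≥0∞) ^ (1 / q) := by
          rw [← ENNReal.rpow_add _ _ hNne hNtop]
          congr 1
          rw [ha]; ring
  exact absurd (hlq.trans hineq) (not_le.mpr hub)
end
end

section
/- (Discrete Hardy–Littlewood maximal inequality.) Let p > 1. There exists a constant C = C(p) such that for every f ∈ ℓ^p(ℤ), ‖ sup_{N ≥ 1} (1/N) Σ_{x ∈ [−N,N] ∩ ℤ} |f(y − x)| ‖_{ℓ^p(ℤ, dy)} ≤ C ‖f‖_{ℓ^p(ℤ)}, where the supremum is over integers N ≥ 1. -/
open scoped BigOperators ENNReal NNReal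
open MeasureTheory Finset

noncomputable section

lemma sum_shift (g : ℤ → ℝ≥0∞) (y : ℤ) (N : ℕ) :
    ∑ x ∈ Finset.Icc (-(N:ℤ)) (N:ℤ), g (y - x) = ∑ u ∈ Finset.Icc (y - N) (y + N), g u := by
  apply Finset.sum_nbij' (fun x => y - x) (fun u => y - u) <;>
    simp_all [Finset.mem_Icc] <;> omega

lemma vitali (μ0 : ℝ≥0∞) (N : ℤ → ℕ) :
    ∀ (n : ℕ) (F : Finset ℤ) (b : ℤ → ℝ≥0∞), F.card ≤ n →
      (∀ y ∈ F, 1 ≤ N y ∧ μ0 * N y < ∑ x ∈ Finset.Icc (y - N y) (y + N y), b x) →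
      (F.card : ℝ≥0∞) * μ0 ≤ 7 * ∑' x, b x := by
  intro n
  induction n with
  | zero =>
    intro F b hF h
    simp [Finset.card_eq_zero.mp (Nat.le_zero.mp hF)]
  | succ n ih =>
    intro F b hF h
    rcases F.eq_empty_or_nonempty with rfl | hne
    · simp
    obtain ⟨y₀, hy₀F, hmax⟩ := F.exists_max_image N hne
    set N₀ := N y₀ with hN₀def
    have hN₀ : 1 ≤ N₀ := (h y₀ hy₀F).1
    classical
    set I₀ := Finset.Icc (y₀ - (N₀:ℤ)) (y₀ + (N₀:ℤ)) with hI₀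
    set J := Finset.Icc (y₀ - 3*(N₀:ℤ)) (y₀ + 3*(N₀:ℤ)) with hJ
    set F' := F.filter (fun z => z ∉ J) with hF'
    set b' := fun x => if x ∈ I₀ then 0 else b x with hb'
    -- F' ⊆ F.erase y₀
    have hy₀J : y₀ ∈ J := by simp only [hJ, Finset.mem_Icc]; omega
    have hsub : F' ⊆ F.erase y₀ := by
      intro z hz
      rw [Finset.mem_filter] at hz
      rw [Finset.mem_erase]
      exact ⟨fun hzy => hz.2 (hzy ▸ hy₀J), hz.1⟩
    have hF'le : F'.card ≤ n := by
      have := Finset.card_le_card hsub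
      rw [Finset.card_erase_of_mem hy₀F] at this
      omega
    -- hypothesis for IH
    have hIH : ∀ z ∈ F', 1 ≤ N z ∧ μ0 * N z < ∑ x ∈ Finset.Icc (z - N z) (z + N z), b' x := by
      intro z hz
      rw [Finset.mem_filter] at hz
      have hNz : N z ≤ N₀ := hmax z hz.1
      have hzJ : z ∉ J := hz.2
      have hsum : ∑ x ∈ Finset.Icc (z - N z) (z + N z), b' x
          = ∑ x ∈ Finset.Icc (z - N z) (z + N z), b x := by
        apply Finset.sum_congr rfl
        intro x hx
        rw [Finset.mem_Icc] at hx
        have hxI : x ∉ I₀ := by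
          simp only [hJ, Finset.mem_Icc, not_and_or, not_le] at hzJ
          have : (N z : ℤ) ≤ (N₀ : ℤ) := by exact_mod_cast hNz
          simp only [hI₀, Finset.mem_Icc, not_and_or, not_le]
          omega
        simp [hb', hxI]
      rw [hsum]
      exact ⟨(h z hz.1).1, (h z hz.1).2⟩
    have hih := ih F' b' hF'le hIH
    -- card split
    have hcard : F.card ≤ F'.card + (6*N₀+1) := by
      have h1 : F'.card + (F.filter (fun z => ¬ z ∉ J)).card = F.card := by
        rw [hF']
        exact Finset.card_filter_add_card_filter_not (fun z => z ∉ J)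
      have h2 : (F.filter (fun z => ¬ z ∉ J)).card ≤ J.card :=
        Finset.card_le_card (by intro z hz; rw [Finset.mem_filter] at hz; exact not_not.mp hz.2)
      have h3 : J.card = 6*N₀+1 := by
        rw [hJ, Int.card_Icc]
        omega
      omega
    -- sum split
    have hsplit : ∑' x, b x = (∑' x, b' x) + ∑ x ∈ I₀, b x := by
      have : ∀ x, b x = b' x + (if x ∈ I₀ then b x else 0) := by
        intro x
        by_cases hx : x ∈ I₀ <;> simp [hb', hx]
      calc ∑' x, b x = ∑' x, (b' x + (if x ∈ I₀ then b x else 0)) := by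
            exact tsum_congr this
        _ = (∑' x, b' x) + ∑' x, (if x ∈ I₀ then b x else 0) := ENNReal.tsum_add
        _ = (∑' x, b' x) + ∑ x ∈ I₀, b x := by
            congr 1
            rw [tsum_eq_sum (s := I₀) (by intro x hx; simp [hx])]
            exact Finset.sum_congr rfl (fun x hx => by simp [hx])
    have hI₀b : μ0 * (N₀ : ℝ≥0∞) ≤ ∑ x ∈ I₀, b x := le_of_lt (h y₀ hy₀F).2
    calc (F.card : ℝ≥0∞) * μ0 ≤ ((F'.card + (6*N₀+1) : ℕ) : ℝ≥0∞) * μ0 := by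
          apply mul_le_mul_left
          exact_mod_cast hcard
      _ = (F'.card : ℝ≥0∞) * μ0 + ((6*N₀+1 : ℕ) : ℝ≥0∞) * μ0 := by
          push_cast; ring
      _ ≤ 7 * (∑' x, b' x) + 7 * (μ0 * N₀) := by
          apply add_le_add hih
          have : ((6*N₀+1 : ℕ) : ℝ≥0∞) ≤ 7 * (N₀ : ℝ≥0∞) := by
            have : (6*N₀+1 : ℕ) ≤ 7*N₀ := by omega
            calc ((6*N₀+1 : ℕ) : ℝ≥0∞) ≤ ((7*N₀ : ℕ) : ℝ≥0∞) := by exact_mod_cast this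
              _ = 7 * (N₀ : ℝ≥0∞) := by push_cast; ring
          calc ((6*N₀+1 : ℕ) : ℝ≥0∞) * μ0 ≤ 7 * (N₀ : ℝ≥0∞) * μ0 := mul_le_mul_left this _
            _ = 7 * (μ0 * N₀) := by ring
      _ ≤ 7 * (∑' x, b' x) + 7 * (∑ x ∈ I₀, b x) := by
          exact add_le_add_right (mul_le_mul_right hI₀b _) _
      _ = 7 * ∑' x, b x := by rw [hsplit]; ring

noncomputable def mxFn (b : ℤ → ℝ≥0∞) (y : ℤ) : ℝ≥0∞ :=
  ⨆ (N : ℕ) (_ : 1 ≤ N), (N : ℝ≥0∞)⁻¹ * ∑ x ∈ Finset.Icc (-(N : ℤ)) (N : ℤ), b (y - x)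

lemma weaktype (b : ℤ → ℝ≥0∞) (l : ℝ≥0∞) (hl0 : l ≠ 0) (hlt : l ≠ ∞) :
    (∑' y : ℤ, (if l < mxFn b y then (1:ℝ≥0∞) else 0)) ≤ 7 * l⁻¹ * ∑' x, b x := by
  classical
  set Nf : ℤ → ℕ := fun y =>
    if h : ∃ N : ℕ, 1 ≤ N ∧ l * N < ∑ x ∈ Finset.Icc (y - (N:ℤ)) (y + (N:ℤ)), b x
    then h.choose else 1 with hNf
  have key : ∀ y : ℤ, l < mxFn b y →
      1 ≤ Nf y ∧ l * Nf y < ∑ x ∈ Finset.Icc (y - (Nf y : ℤ)) (y + (Nf y : ℤ)), b x := by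
    intro y hy
    have hex : ∃ N : ℕ, 1 ≤ N ∧ l * N < ∑ x ∈ Finset.Icc (y - (N:ℤ)) (y + (N:ℤ)), b x := by
      rw [mxFn, lt_iSup_iff] at hy
      obtain ⟨N, hy⟩ := hy
      rw [lt_iSup_iff] at hy
      obtain ⟨hN, hy⟩ := hy
      refine ⟨N, hN, ?_⟩
      rw [sum_shift] at hy
      have hNne : (N : ℝ≥0∞) ≠ 0 := by simp; omega
      rw [← ENNReal.div_eq_inv_mul] at hy
      exact (ENNReal.lt_div_iff_mul_lt (Or.inl hNne) (Or.inl (ENNReal.natCast_ne_top N))).mp hy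
    rw [hNf]
    simp only [hex, dif_pos]
    exact hex.choose_spec
  rw [ENNReal.tsum_eq_iSup_sum]
  apply iSup_le
  intro G
  have hsum : ∑ y ∈ G, (if l < mxFn b y then (1:ℝ≥0∞) else 0)
      = ((G.filter (fun y => l < mxFn b y)).card : ℝ≥0∞) := Finset.sum_boole _ _
  rw [hsum]
  set F := G.filter (fun y => l < mxFn b y) with hF
  have hv := vitali l Nf F.card F b le_rfl (by
    intro y hy
    rw [hF, Finset.mem_filter] at hy
    exact key y hy.2)
  rw [show (7:ℝ≥0∞) * l⁻¹ * ∑' x, b x = (7 * ∑' x, b x) / l by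
    rw [ENNReal.div_eq_inv_mul]; ring]
  exact (ENNReal.le_div_iff_mul_le (Or.inl hl0) (Or.inl hlt)).mpr hv


lemma icc_card (N : ℕ) : (Finset.Icc (-(N:ℤ)) (N:ℤ)).card = 2*N+1 := by
  rw [Int.card_Icc]; omega

lemma trunc (a : ℤ → ℝ≥0∞) (l : ℝ≥0∞) (hlt : l ≠ ∞) (y : ℤ)
    (h : l < mxFn a y) :
    l/2 < mxFn (fun u => if l < 6 * a u then a u else 0) y := by
  classical
  set b : ℤ → ℝ≥0∞ := fun u => if l < 6 * a u then a u else 0 with hb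
  have hab : ∀ u, a u ≤ b u + l/6 := by
    intro u
    by_cases h6 : l < 6 * a u
    · simp only [hb, if_pos h6]; exact le_add_right le_rfl
    · have : a u ≤ l / 6 := by
        rw [ENNReal.le_div_iff_mul_le (Or.inl (by norm_num)) (Or.inl (by norm_num))]
        rw [mul_comm]; exact not_lt.mp h6
      simp only [hb, if_neg h6, zero_add]; exact this
  have h36 : (3:ℝ≥0∞) * (l/6) ≤ l/2 := by
    have h6eq : (6:ℝ≥0∞) = 2 * 3 := by norm_num
    rw [div_eq_mul_inv, div_eq_mul_inv, h6eq,
      ENNReal.mul_inv (by norm_num) (by norm_num)]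
    apply le_of_eq
    calc (3:ℝ≥0∞) * (l * ((2:ℝ≥0∞)⁻¹ * (3:ℝ≥0∞)⁻¹))
        = l * 2⁻¹ * ((3:ℝ≥0∞) * (3:ℝ≥0∞)⁻¹) := by ring
      _ = l * 2⁻¹ := by rw [ENNReal.mul_inv_cancel (by norm_num) (by norm_num), mul_one]
  have key : mxFn a y ≤ mxFn b y + l/2 := by
    rw [mxFn]
    apply iSup_le; intro N; apply iSup_le; intro hN
    have hsum : ∑ x ∈ Finset.Icc (-(N:ℤ)) (N:ℤ), a (y - x)
        ≤ (∑ x ∈ Finset.Icc (-(N:ℤ)) (N:ℤ), b (y - x)) + (2*N+1) * (l/6) := by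
      calc ∑ x ∈ Finset.Icc (-(N:ℤ)) (N:ℤ), a (y - x)
          ≤ ∑ x ∈ Finset.Icc (-(N:ℤ)) (N:ℤ), (b (y - x) + l/6) :=
            Finset.sum_le_sum (fun x _ => hab _)
        _ = (∑ x ∈ Finset.Icc (-(N:ℤ)) (N:ℤ), b (y - x)) + (2*N+1) * (l/6) := by
            rw [Finset.sum_add_distrib, Finset.sum_const, icc_card]
            simp [nsmul_eq_mul]
    have hN0 : (N:ℝ≥0∞) ≠ 0 := by simp; omega
    have hNt : (N:ℝ≥0∞) ≠ ∞ := ENNReal.natCast_ne_top N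
    calc (N:ℝ≥0∞)⁻¹ * ∑ x ∈ Finset.Icc (-(N:ℤ)) (N:ℤ), a (y - x)
        ≤ (N:ℝ≥0∞)⁻¹ * ((∑ x ∈ Finset.Icc (-(N:ℤ)) (N:ℤ), b (y - x)) + (2*N+1) * (l/6)) :=
          mul_le_mul_right hsum _
      _ = (N:ℝ≥0∞)⁻¹ * (∑ x ∈ Finset.Icc (-(N:ℤ)) (N:ℤ), b (y - x))
          + (N:ℝ≥0∞)⁻¹ * ((2*N+1) * (l/6)) := by rw [mul_add]
      _ ≤ mxFn b y + l/2 := by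
          apply add_le_add
          · rw [mxFn]
            exact le_iSup_of_le N (le_iSup_of_le hN le_rfl)
          · have h2N : ((2*N+1 : ℕ) : ℝ≥0∞) ≤ 3 * N := by
              have : (2*N+1 : ℕ) ≤ 3*N := by omega
              calc ((2*N+1 : ℕ) : ℝ≥0∞) ≤ ((3*N : ℕ) : ℝ≥0∞) := by exact_mod_cast this
                _ = 3 * N := by push_cast; ring
            calc (N:ℝ≥0∞)⁻¹ * ((2*N+1) * (l/6))
                ≤ (N:ℝ≥0∞)⁻¹ * ((3 * N) * (l/6)) := by
                  apply mul_le_mul_right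
                  apply mul_le_mul_left
                  exact_mod_cast h2N
              _ = ((N:ℝ≥0∞)⁻¹ * N) * (3 * (l/6)) := by ring
              _ = 3 * (l/6) := by rw [ENNReal.inv_mul_cancel hN0 hNt, one_mul]
              _ ≤ l/2 := h36
  have : l/2 + l/2 < mxFn b y + l/2 := by
    rw [ENNReal.add_halves]
    exact lt_of_lt_of_le h key
  exact (ENNReal.add_lt_add_iff_right (by
    exact ne_top_of_le_ne_top hlt ENNReal.half_le_self)).mp this


lemma mainbound (p : ℝ) (hp : 1 < p) : ∃ C0 : ℝ≥0∞, C0 ≠ ∞ ∧ ∀ a : ℤ → ℝ≥0∞,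
    (∑' u, a u ^ p) ≠ ∞ → ∑' y, (mxFn a y) ^ p ≤ C0 * ∑' u, a u ^ p := by
  classical
  have hp0 : (0:ℝ) < p := by linarith
  have hp1 : (0:ℝ) ≤ p - 1 := by linarith
  have h2t : (2:ℝ≥0∞) ≠ ∞ := by norm_num
  have h20 : (2:ℝ≥0∞) ≠ 0 := by norm_num
  have h12 : (1:ℝ≥0∞) < 2 := by norm_num
  set r : ℝ≥0∞ := (2:ℝ≥0∞) ^ (-(p-1)) with hr
  have hrlt : r < 1 := by
    have h1 : (2:ℝ≥0∞) ^ (-(p-1)) < 2 ^ (0:ℝ) :=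
      ENNReal.rpow_lt_rpow_of_exponent_lt h12 h2t (by linarith)
    rwa [ENNReal.rpow_zero] at h1
  set cp : ℝ≥0∞ := (1 - r)⁻¹ with hcp
  have hcpt : cp ≠ ∞ := ENNReal.inv_ne_top.mpr (by
    rw [Ne, tsub_eq_zero_iff_le]; exact hrlt.not_ge)
  refine ⟨14 * (2:ℝ≥0∞)^(2*p) * (6:ℝ≥0∞)^(p-1) * cp, ?_, ?_⟩
  · exact ENNReal.mul_ne_top (ENNReal.mul_ne_top
      (ENNReal.mul_ne_top (by norm_num)
        (ENNReal.rpow_ne_top_of_nonneg (by linarith) h2t))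
      (ENNReal.rpow_ne_top_of_nonneg hp1 (by norm_num))) hcpt
  intro a hT
  have haf : ∀ u, a u ≠ ∞ := by
    intro u hu
    apply hT
    rw [eq_top_iff]
    calc (⊤:ℝ≥0∞) = a u ^ p := by rw [hu, ENNReal.top_rpow_of_pos hp0]
      _ ≤ ∑' u, a u ^ p := ENNReal.le_tsum u
  set K : ℝ≥0∞ := (∑' u, a u ^ p) ^ (1/p) with hK
  have hKt : K ≠ ∞ := ENNReal.rpow_ne_top_of_nonneg (by positivity) hT
  have haK : ∀ u, a u ≤ K := by
    intro u
    have h1 : a u = (a u ^ p) ^ (1/p) := by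
      rw [← ENNReal.rpow_mul, mul_one_div_cancel hp0.ne', ENNReal.rpow_one]
    rw [h1, hK]
    exact ENNReal.rpow_le_rpow (ENNReal.le_tsum u) (by positivity)
  have hMle : ∀ y, mxFn a y ≤ 3 * K := by
    intro y
    rw [mxFn]
    apply iSup_le; intro N; apply iSup_le; intro hN
    have hN0 : (N:ℝ≥0∞) ≠ 0 := by simp; omega
    have hsum : ∑ x ∈ Finset.Icc (-(N:ℤ)) (N:ℤ), a (y - x) ≤ ((2*N+1 : ℕ) : ℝ≥0∞) * K := by
      calc ∑ x ∈ Finset.Icc (-(N:ℤ)) (N:ℤ), a (y - x)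
          ≤ (Finset.Icc (-(N:ℤ)) (N:ℤ)).card • K :=
            Finset.sum_le_card_nsmul _ _ _ (fun x _ => haK _)
        _ = ((2*N+1 : ℕ) : ℝ≥0∞) * K := by rw [icc_card]; simp [nsmul_eq_mul]
    calc (N:ℝ≥0∞)⁻¹ * ∑ x ∈ Finset.Icc (-(N:ℤ)) (N:ℤ), a (y - x)
        ≤ (N:ℝ≥0∞)⁻¹ * (((2*N+1 : ℕ) : ℝ≥0∞) * K) := mul_le_mul_right hsum _
      _ ≤ (N:ℝ≥0∞)⁻¹ * ((3 * (N:ℝ≥0∞)) * K) := by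
          apply mul_le_mul_right
          apply mul_le_mul_left
          calc ((2*N+1 : ℕ) : ℝ≥0∞) ≤ ((3*N : ℕ) : ℝ≥0∞) := by
                have : (2*N+1:ℕ) ≤ 3*N := by omega
                exact_mod_cast this
            _ = 3 * (N:ℝ≥0∞) := by push_cast; ring
      _ = ((N:ℝ≥0∞)⁻¹ * N) * (3 * K) := by ring
      _ = 3 * K := by rw [ENNReal.inv_mul_cancel hN0 (ENNReal.natCast_ne_top N), one_mul]
  have hMt : ∀ y, mxFn a y ≠ ∞ :=
    fun y => ne_top_of_le_ne_top (ENNReal.mul_ne_top (by norm_num) hKt) (hMle y)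
  -- level functions
  set g : ℤ → ℤ → ℝ≥0∞ := fun k y =>
    (2:ℝ≥0∞)^(((k:ℝ)+2)*p) * (if (2:ℝ≥0∞)^((k:ℝ)) < mxFn a y then 1 else 0) with hg
  -- pointwise layer cake
  have hpoint : ∀ y, (mxFn a y) ^ p ≤ ∑' k : ℤ, g k y := by
    intro y
    by_cases h0 : mxFn a y = 0
    · rw [h0, ENNReal.zero_rpow_of_pos hp0]; exact zero_le
    obtain ⟨m, hm⟩ := ENNReal.exists_mem_Ico_zpow h0 (hMt y) h12 h2t
    obtain ⟨hm1, hm2⟩ := hm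
    rw [show ((2:ℝ≥0∞) ^ m) = 2 ^ ((m:ℤ):ℝ) from (ENNReal.rpow_intCast 2 m).symm] at hm1
    rw [show ((2:ℝ≥0∞) ^ (m+1)) = 2 ^ (((m+1:ℤ)):ℝ) from (ENNReal.rpow_intCast 2 (m+1)).symm] at hm2
    have hcond : (2:ℝ≥0∞)^(((m-1:ℤ)):ℝ) < mxFn a y := by
      refine lt_of_lt_of_le ?_ hm1
      apply ENNReal.rpow_lt_rpow_of_exponent_lt h12 h2t
      push_cast; linarith
    have hval : (mxFn a y) ^ p ≤ (2:ℝ≥0∞)^((((m-1:ℤ):ℝ)+2)*p) := by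
      calc (mxFn a y) ^ p ≤ ((2:ℝ≥0∞) ^ (((m+1:ℤ)):ℝ)) ^ p :=
            ENNReal.rpow_le_rpow hm2.le hp0.le
        _ = (2:ℝ≥0∞)^((((m+1:ℤ)):ℝ)*p) := (ENNReal.rpow_mul 2 _ p).symm
        _ = (2:ℝ≥0∞)^((((m-1:ℤ):ℝ)+2)*p) := by push_cast; ring_nf
    calc (mxFn a y) ^ p ≤ g (m-1) y := by
          rw [hg]; simp only [hcond, if_pos]; rw [mul_one]; exact hval
      _ ≤ ∑' k : ℤ, g k y := ENNReal.le_tsum (m-1)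
  -- sum over y
  have step1 : ∑' y, (mxFn a y) ^ p ≤
      ∑' k : ℤ, (2:ℝ≥0∞)^(((k:ℝ)+2)*p) *
        ∑' y : ℤ, (if (2:ℝ≥0∞)^((k:ℝ)) < mxFn a y then (1:ℝ≥0∞) else 0) := by
    calc ∑' y, (mxFn a y) ^ p ≤ ∑' y, ∑' k : ℤ, g k y := ENNReal.tsum_le_tsum hpoint
      _ = ∑' k : ℤ, ∑' y, g k y := ENNReal.tsum_comm
      _ = ∑' k : ℤ, (2:ℝ≥0∞)^(((k:ℝ)+2)*p) *
            ∑' y : ℤ, (if (2:ℝ≥0∞)^((k:ℝ)) < mxFn a y then (1:ℝ≥0∞) else 0) := by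
          apply tsum_congr; intro k
          rw [hg]; exact ENNReal.tsum_mul_left
  -- weak type at each level
  set B : ℤ → ℝ≥0∞ := fun k => ∑' u : ℤ, (if (2:ℝ≥0∞)^((k:ℝ)) < 6 * a u then a u else 0) with hB
  have step2 : ∀ k : ℤ,
      (∑' y : ℤ, (if (2:ℝ≥0∞)^((k:ℝ)) < mxFn a y then (1:ℝ≥0∞) else 0))
        ≤ 14 * ((2:ℝ≥0∞)^((k:ℝ)))⁻¹ * B k := by
    intro k
    set l : ℝ≥0∞ := (2:ℝ≥0∞)^((k:ℝ)) with hl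
    have hl0 : l ≠ 0 := (ENNReal.rpow_pos (by norm_num) h2t).ne'
    have hlt : l ≠ ∞ := by
      rw [hl, Ne, ENNReal.rpow_eq_top_iff]
      push_neg
      constructor
      · intro h; exact absurd h h20
      · intro h; exact absurd h h2t
    have hl2 : l/2 ≠ 0 := by
      rw [div_eq_mul_inv]
      exact mul_ne_zero hl0 (by simp)
    have hl2t : l/2 ≠ ∞ := ne_top_of_le_ne_top hlt ENNReal.half_le_self
    calc (∑' y : ℤ, (if l < mxFn a y then (1:ℝ≥0∞) else 0))
        ≤ (∑' y : ℤ, (if l/2 < mxFn (fun u => if l < 6 * a u then a u else 0) y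
            then (1:ℝ≥0∞) else 0)) := by
          apply ENNReal.tsum_le_tsum; intro y
          by_cases hy : l < mxFn a y
          · rw [if_pos hy, if_pos (trunc a l hlt y hy)]
          · rw [if_neg hy]; exact zero_le
      _ ≤ 7 * (l/2)⁻¹ * B k := weaktype _ _ hl2 hl2t
      _ = 14 * l⁻¹ * B k := by
          congr 1
          rw [div_eq_mul_inv, ENNReal.mul_inv (Or.inl hl0) (Or.inl hlt), inv_inv]
          ring
  -- combine
  have step3 : ∑' y, (mxFn a y) ^ p ≤
      14 * (2:ℝ≥0∞)^(2*p) * ∑' k : ℤ, (2:ℝ≥0∞)^((k:ℝ)*(p-1)) * B k := by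
    calc ∑' y, (mxFn a y) ^ p
        ≤ ∑' k : ℤ, (2:ℝ≥0∞)^(((k:ℝ)+2)*p) * (14 * ((2:ℝ≥0∞)^((k:ℝ)))⁻¹ * B k) := by
          refine le_trans step1 (ENNReal.tsum_le_tsum fun k => mul_le_mul_right (step2 k) _)
      _ = ∑' k : ℤ, 14 * (2:ℝ≥0∞)^(2*p) * ((2:ℝ≥0∞)^((k:ℝ)*(p-1)) * B k) := by
          apply tsum_congr; intro k
          have : (2:ℝ≥0∞)^(((k:ℝ)+2)*p) * ((2:ℝ≥0∞)^((k:ℝ)))⁻¹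
              = (2:ℝ≥0∞)^(2*p) * (2:ℝ≥0∞)^((k:ℝ)*(p-1)) := by
            rw [← ENNReal.rpow_neg, ← ENNReal.rpow_add _ _ h20 h2t,
              ← ENNReal.rpow_add _ _ h20 h2t]
            congr 1; ring
          calc (2:ℝ≥0∞)^(((k:ℝ)+2)*p) * (14 * ((2:ℝ≥0∞)^((k:ℝ)))⁻¹ * B k)
              = 14 * ((2:ℝ≥0∞)^(((k:ℝ)+2)*p) * ((2:ℝ≥0∞)^((k:ℝ)))⁻¹) * B k := by ring
            _ = 14 * ((2:ℝ≥0∞)^(2*p) * (2:ℝ≥0∞)^((k:ℝ)*(p-1))) * B k := by rw [this]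
            _ = 14 * (2:ℝ≥0∞)^(2*p) * ((2:ℝ≥0∞)^((k:ℝ)*(p-1)) * B k) := by ring
      _ = 14 * (2:ℝ≥0∞)^(2*p) * ∑' k : ℤ, (2:ℝ≥0∞)^((k:ℝ)*(p-1)) * B k :=
          ENNReal.tsum_mul_left
  -- swap and inner geometric sum
  have step4 : ∑' k : ℤ, (2:ℝ≥0∞)^((k:ℝ)*(p-1)) * B k
      = ∑' u : ℤ, a u * ∑' k : ℤ, (2:ℝ≥0∞)^((k:ℝ)*(p-1)) *
          (if (2:ℝ≥0∞)^((k:ℝ)) < 6 * a u then (1:ℝ≥0∞) else 0) := by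
    calc ∑' k : ℤ, (2:ℝ≥0∞)^((k:ℝ)*(p-1)) * B k
        = ∑' k : ℤ, ∑' u : ℤ, (2:ℝ≥0∞)^((k:ℝ)*(p-1)) *
            (if (2:ℝ≥0∞)^((k:ℝ)) < 6 * a u then a u else 0) := by
          apply tsum_congr; intro k
          rw [hB]; exact ENNReal.tsum_mul_left.symm
      _ = ∑' u : ℤ, ∑' k : ℤ, (2:ℝ≥0∞)^((k:ℝ)*(p-1)) *
            (if (2:ℝ≥0∞)^((k:ℝ)) < 6 * a u then a u else 0) := ENNReal.tsum_comm
      _ = ∑' u : ℤ, a u * ∑' k : ℤ, (2:ℝ≥0∞)^((k:ℝ)*(p-1)) *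
            (if (2:ℝ≥0∞)^((k:ℝ)) < 6 * a u then (1:ℝ≥0∞) else 0) := by
          apply tsum_congr; intro u
          rw [← ENNReal.tsum_mul_left]
          apply tsum_congr; intro k
          by_cases hc : (2:ℝ≥0∞)^((k:ℝ)) < 6 * a u
          · rw [if_pos hc, if_pos hc]; ring
          · rw [if_neg hc, if_neg hc]; ring
  have step5 : ∀ u : ℤ, a u * (∑' k : ℤ, (2:ℝ≥0∞)^((k:ℝ)*(p-1)) *
      (if (2:ℝ≥0∞)^((k:ℝ)) < 6 * a u then (1:ℝ≥0∞) else 0))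
      ≤ (6:ℝ≥0∞)^(p-1) * cp * a u ^ p := by
    intro u
    by_cases h0 : a u = 0
    · have : ∀ k : ℤ, (2:ℝ≥0∞)^((k:ℝ)*(p-1)) *
          (if (2:ℝ≥0∞)^((k:ℝ)) < 6 * a u then (1:ℝ≥0∞) else 0) = 0 := by
        intro k
        rw [h0, mul_zero, if_neg (by simp), mul_zero]
      rw [h0, zero_mul]; exact zero_le
    have h6a0 : 6 * a u ≠ 0 := mul_ne_zero (by norm_num) h0
    have h6at : 6 * a u ≠ ∞ := ENNReal.mul_ne_top (by norm_num) (haf u)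
    obtain ⟨m, hm1, hm2⟩ := ENNReal.exists_mem_Ico_zpow h6a0 h6at h12 h2t
    rw [show ((2:ℝ≥0∞) ^ m) = 2 ^ ((m:ℤ):ℝ) from (ENNReal.rpow_intCast 2 m).symm] at hm1
    rw [show ((2:ℝ≥0∞) ^ (m+1)) = 2 ^ (((m+1:ℤ)):ℝ) from (ENNReal.rpow_intCast 2 (m+1)).symm] at hm2
    have hinner : (∑' k : ℤ, (2:ℝ≥0∞)^((k:ℝ)*(p-1)) *
        (if (2:ℝ≥0∞)^((k:ℝ)) < 6 * a u then (1:ℝ≥0∞) else 0))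
        ≤ (2:ℝ≥0∞)^((m:ℝ)*(p-1)) * cp := by
      have hle : ∀ k : ℤ, (2:ℝ≥0∞)^((k:ℝ)*(p-1)) *
          (if (2:ℝ≥0∞)^((k:ℝ)) < 6 * a u then (1:ℝ≥0∞) else 0)
          ≤ (if k ≤ m then (2:ℝ≥0∞)^((k:ℝ)*(p-1)) else 0) := by
        intro k
        by_cases hk : k ≤ m
        · rw [if_pos hk]
          by_cases hc : (2:ℝ≥0∞)^((k:ℝ)) < 6 * a u
          · rw [if_pos hc, mul_one]
          · rw [if_neg hc, mul_zero]; exact zero_le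
        · have hc : ¬ ((2:ℝ≥0∞)^((k:ℝ)) < 6 * a u) := by
            push_neg
            refine le_of_lt (lt_of_lt_of_le hm2 ?_)
            apply ENNReal.rpow_le_rpow_of_exponent_le h12.le
            have hk' : m + 1 ≤ k := by omega
            exact_mod_cast hk'
          rw [if_neg hc, mul_zero, if_neg hk]
      refine le_trans (ENNReal.tsum_le_tsum hle) ?_
      have hinj : Function.Injective (fun j : ℕ => m - (j:ℤ)) := by
        intro i j hij; simpa using hij
      have hsupp : Function.support (fun k : ℤ =>
          (if k ≤ m then (2:ℝ≥0∞)^((k:ℝ)*(p-1)) else 0)) ⊆ Set.range (fun j : ℕ => m - (j:ℤ)) := by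
        intro k hk
        simp only [Function.mem_support] at hk
        have hkm : k ≤ m := by by_contra hc; rw [if_neg hc] at hk; exact hk rfl
        exact ⟨(m - k).toNat, by simp; omega⟩
      rw [← hinj.tsum_eq hsupp]
      have heq : ∀ j : ℕ, (if (m - (j:ℤ)) ≤ m then (2:ℝ≥0∞)^((Int.cast (m - (j:ℤ)) : ℝ)*(p-1)) else 0)
          = (2:ℝ≥0∞)^((m:ℝ)*(p-1)) * r ^ j := by
        intro j
        rw [if_pos (by omega)]
        rw [hr, ← ENNReal.rpow_natCast ((2:ℝ≥0∞) ^ (-(p-1))) j, ← ENNReal.rpow_mul,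
          ← ENNReal.rpow_add _ _ h20 h2t]
        congr 1
        push_cast
        ring
      apply le_of_eq
      beta_reduce
      rw [tsum_congr heq, ENNReal.tsum_mul_left, ENNReal.tsum_geometric]
    have hpow : (2:ℝ≥0∞)^((m:ℝ)*(p-1)) ≤ (6:ℝ≥0∞)^(p-1) * (a u)^(p-1) := by
      calc (2:ℝ≥0∞)^((m:ℝ)*(p-1)) = ((2:ℝ≥0∞)^((m:ℝ)))^(p-1) := ENNReal.rpow_mul 2 _ _
        _ ≤ (6 * a u)^(p-1) := ENNReal.rpow_le_rpow hm1 hp1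
        _ = (6:ℝ≥0∞)^(p-1) * (a u)^(p-1) := ENNReal.mul_rpow_of_nonneg _ _ hp1
    calc a u * (∑' k : ℤ, (2:ℝ≥0∞)^((k:ℝ)*(p-1)) *
          (if (2:ℝ≥0∞)^((k:ℝ)) < 6 * a u then (1:ℝ≥0∞) else 0))
        ≤ a u * ((2:ℝ≥0∞)^((m:ℝ)*(p-1)) * cp) := mul_le_mul_right hinner _
      _ ≤ a u * (((6:ℝ≥0∞)^(p-1) * (a u)^(p-1)) * cp) :=
          mul_le_mul_right (mul_le_mul_left hpow _) _
      _ = (6:ℝ≥0∞)^(p-1) * cp * (a u * (a u)^(p-1)) := by ring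
      _ = (6:ℝ≥0∞)^(p-1) * cp * a u ^ p := by
          congr 1
          nth_rewrite 1 [← ENNReal.rpow_one (a u)]
          rw [← ENNReal.rpow_add _ _ h0 (haf u)]
          congr 1
          ring
  calc ∑' y, (mxFn a y) ^ p
      ≤ 14 * (2:ℝ≥0∞)^(2*p) * ∑' k : ℤ, (2:ℝ≥0∞)^((k:ℝ)*(p-1)) * B k := step3
    _ = 14 * (2:ℝ≥0∞)^(2*p) * ∑' u : ℤ, a u * ∑' k : ℤ, (2:ℝ≥0∞)^((k:ℝ)*(p-1)) *
          (if (2:ℝ≥0∞)^((k:ℝ)) < 6 * a u then (1:ℝ≥0∞) else 0) := by rw [step4]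
    _ ≤ 14 * (2:ℝ≥0∞)^(2*p) * ∑' u : ℤ, ((6:ℝ≥0∞)^(p-1) * cp * a u ^ p) :=
        mul_le_mul_right (ENNReal.tsum_le_tsum step5) _
    _ = 14 * (2:ℝ≥0∞)^(2*p) * ((6:ℝ≥0∞)^(p-1) * cp * ∑' u : ℤ, a u ^ p) := by
        rw [ENNReal.tsum_mul_left]
    _ = 14 * (2:ℝ≥0∞)^(2*p) * (6:ℝ≥0∞)^(p-1) * cp * ∑' u : ℤ, a u ^ p := by ring


/-- discrete Hardy–Littlewood maximal inequality: for `p > 1` there is a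
constant `C = C(p)` such that for every `f ∈ ℓ^p(ℤ)`,
`‖ sup_{N ≥ 1} N⁻¹ ∑_{|x| ≤ N} |f(y - x)| ‖_{ℓ^p(dy)} ≤ C ‖f‖_{ℓ^p}`. -/
theorem statement8 (p : ℝ) (hp : 1 < p) :
    ∃ C : ℝ≥0, ∀ f : ℤ → ℂ, lpNorm p f ≠ ∞ →
      (∑' y : ℤ, (⨆ (N : ℕ) (_ : 1 ≤ N), (N : ℝ≥0∞)⁻¹ *
          ∑ x ∈ Finset.Icc (-(N : ℤ)) (N : ℤ), (‖f (y - x)‖₊ : ℝ≥0∞)) ^ p) ^ (1 / p)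
        ≤ (C : ℝ≥0∞) * lpNorm p f := by
  obtain ⟨C0, hC0, hmain⟩ := mainbound p hp
  have hp0 : (0:ℝ) < p := by linarith
  refine ⟨(C0 ^ (1/p)).toNNReal, ?_⟩
  intro f hf
  have hC : ((C0 ^ (1/p)).toNNReal : ℝ≥0∞) = C0 ^ (1/p) :=
    ENNReal.coe_toNNReal (ENNReal.rpow_ne_top_of_nonneg (by positivity) hC0)
  rw [hC]
  set a : ℤ → ℝ≥0∞ := fun u => (‖f u‖₊ : ℝ≥0∞) with ha
  have hT : (∑' u, a u ^ p) ≠ ∞ := by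
    intro h
    apply hf
    rw [_root_.lpNorm, h, ENNReal.top_rpow_of_pos (by positivity)]
  have hm := hmain a hT
  calc (∑' y : ℤ, (⨆ (N : ℕ) (_ : 1 ≤ N), (N : ℝ≥0∞)⁻¹ *
          ∑ x ∈ Finset.Icc (-(N : ℤ)) (N : ℤ), (‖f (y - x)‖₊ : ℝ≥0∞)) ^ p) ^ (1 / p)
      = (∑' y, (mxFn a y) ^ p) ^ (1/p) := rfl
    _ ≤ (C0 * ∑' u, a u ^ p) ^ (1/p) := ENNReal.rpow_le_rpow hm (by positivity)
    _ = C0 ^ (1/p) * (∑' u, a u ^ p) ^ (1/p) := ENNReal.mul_rpow_of_nonneg _ _ (by positivity)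
    _ = C0 ^ (1/p) * lpNorm p f := rfl
end
end

section
/- Let n ≥ 4, let λ ≥ 1 be an integer, and let N be any integer with N ≥ λ^{1/2}. For functions f₁,…,f_n : ℤ → ℂ and y ∈ ℤ, |A_λ[f₁,…,f_n](y)| ≤ (1/r_n(λ)) ∏_{i=1}^n ( ∫₀¹ |W_i(α,y)|^n dα )^{1/n}, where W_i(α,y) = Σ_{x ∈ [−N,N] ∩ ℤ} f_i(y − x) e(x² α) and e(t) = e^{2πit}. -/
open scoped BigOperators ENNReal NNReal
open MeasureTheory Finset

noncomputable section

lemma orth (m : ℤ) :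
    (∫ α in Set.Ioc (0:ℝ) 1, Complex.exp (2 * Real.pi * Complex.I * (m:ℂ) * (α:ℂ))) =
    if m = 0 then 1 else 0 := by
  rw [← intervalIntegral.integral_of_le zero_le_one]
  rcases eq_or_ne m 0 with hm | hm
  · simp [hm]
  · rw [if_neg hm]
    have hc : (2 * (Real.pi:ℂ) * Complex.I * (m:ℂ)) ≠ 0 := by
      simp [Real.pi_ne_zero, Complex.I_ne_zero, hm]
    rw [integral_exp_mul_complex hc]
    have h1 : (2 * (Real.pi:ℂ) * Complex.I * (m:ℂ)) * (1:ℂ) = (m:ℂ) * (2 * Real.pi * Complex.I) := by ring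
    simp [h1, Complex.exp_int_mul_two_pi_mul_I]

lemma key_identity (n lam N : ℕ) (hNlam : (lam:ℤ) ≤ (N:ℤ)^2) (f : Fin n → ℤ → ℂ) (y : ℤ) :
    ∑ᶠ x ∈ {x : Fin n → ℤ | ∑ i, (x i)^2 = (lam:ℤ)}, ∏ i, f i (y - x i)
    = ∫ α in Set.Ioc (0:ℝ) 1,
        (∏ i, ∑ x ∈ Finset.Icc (-(N:ℤ)) (N:ℤ),
            f i (y - x) * Complex.exp (2 * Real.pi * Complex.I * (x:ℂ)^2 * (α:ℂ)))
        * Complex.exp (-(2 * Real.pi * Complex.I * (lam:ℂ) * (α:ℂ))) := by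
  classical
  set box : Finset (Fin n → ℤ) := Fintype.piFinset (fun _ => Finset.Icc (-(N:ℤ)) (N:ℤ)) with hbox
  set T : Finset (Fin n → ℤ) := box.filter (fun x => ∑ i, (x i)^2 = (lam:ℤ)) with hT
  have hset : {x : Fin n → ℤ | ∑ i, (x i)^2 = (lam:ℤ)} = ↑T := by
    ext x
    simp only [Set.mem_setOf_eq, hT, coe_filter, hbox, Fintype.mem_piFinset, Finset.mem_Icc,
      Set.mem_setOf_eq]
    constructor
    · intro h
      refine ⟨fun i => ?_, h⟩
      have h1 : (x i)^2 ≤ (lam:ℤ) := by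
        rw [← h]
        exact Finset.single_le_sum (f := fun j => (x j)^2) (fun j _ => sq_nonneg _)
          (Finset.mem_univ i)
      have h2 : (x i)^2 ≤ (N:ℤ)^2 := h1.trans hNlam
      have h0 : (0:ℤ) ≤ (N:ℤ) := Int.natCast_nonneg N
      constructor <;> nlinarith [sq_nonneg (x i + N), sq_nonneg (x i - N)]
    · exact fun h => h.2
  rw [hset, finsum_mem_coe_finset]
  have hpt : ∀ α : ℝ,
      (∏ i, ∑ x ∈ Finset.Icc (-(N:ℤ)) (N:ℤ),
          f i (y - x) * Complex.exp (2 * Real.pi * Complex.I * (x:ℂ)^2 * (α:ℂ)))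
        * Complex.exp (-(2 * Real.pi * Complex.I * (lam:ℂ) * (α:ℂ)))
      = ∑ x ∈ box, (∏ i, f i (y - x i)) *
          Complex.exp (2 * Real.pi * Complex.I * (((∑ i, (x i)^2 - lam : ℤ)):ℂ) * (α:ℂ)) := by
    intro α
    rw [Finset.prod_univ_sum, Finset.sum_mul]
    refine Finset.sum_congr rfl fun x hx => ?_
    rw [Finset.prod_mul_distrib, mul_assoc]
    congr 1
    rw [← Complex.exp_sum, ← Complex.exp_add]
    congr 1
    have hsum : (∑ i, 2 * (Real.pi:ℂ) * Complex.I * ((x i : ℤ):ℂ)^2 * (α:ℂ))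
        = 2 * Real.pi * Complex.I * (∑ i, ((x i : ℤ):ℂ)^2) * (α:ℂ) := by
      simp [Finset.mul_sum, Finset.sum_mul, mul_assoc, mul_comm, mul_left_comm]
    rw [hsum]
    push_cast
    ring
  rw [MeasureTheory.setIntegral_congr_fun measurableSet_Ioc (fun α _ => hpt α)]
  have hintg : ∀ x : Fin n → ℤ, IntegrableOn
      (fun α : ℝ => (∏ i, f i (y - x i)) *
        Complex.exp (2 * Real.pi * Complex.I * (((∑ i, (x i)^2 - lam : ℤ)):ℂ) * (α:ℂ)))
      (Set.Ioc (0:ℝ) 1) volume := by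
    intro x
    apply Continuous.integrableOn_Ioc
    exact continuous_const.mul (Complex.continuous_exp.comp (by continuity))
  rw [MeasureTheory.integral_finset_sum box (fun x _ => hintg x)]
  have : ∀ x : Fin n → ℤ, (∫ α in Set.Ioc (0:ℝ) 1,
      (∏ i, f i (y - x i)) *
        Complex.exp (2 * Real.pi * Complex.I * (((∑ i, (x i)^2 - lam : ℤ)):ℂ) * (α:ℂ)))
      = (∏ i, f i (y - x i)) * (if (∑ i, (x i)^2 - (lam:ℤ)) = 0 then 1 else 0) := by
    intro x
    rw [MeasureTheory.integral_const_mul, orth]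
  simp only [this, mul_ite, mul_one, mul_zero, sub_eq_zero]
  rw [hT, Finset.sum_filter]


lemma holder_bound (n : ℕ) (hn : 0 < n) (W : Fin n → ℝ → ℂ) (hW : ∀ i, Continuous (W i)) :
    (∫ α in Set.Ioc (0:ℝ) 1, ∏ i, ‖W i α‖) ≤
      ∏ i, (∫ α in Set.Ioc (0:ℝ) 1, ‖W i α‖ ^ n) ^ ((1:ℝ)/n) := by
  set μ : Measure ℝ := volume.restrict (Set.Ioc (0:ℝ) 1) with hμ
  have hn' : (n:ℝ) ≠ 0 := Nat.cast_ne_zero.mpr hn.ne'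
  -- measurability
  have hmeas : ∀ i, AEMeasurable (fun α => ((‖W i α‖₊ : ℝ≥0∞)) ^ (n:ℕ)) μ := fun i =>
    ((((hW i).nnnorm.measurable).coe_nnreal_ennreal).pow_const n).aemeasurable
  have hsum : ∑ _i : Fin n, (1:ℝ)/n = 1 := by
    simp [Finset.sum_const, hn']
  have hold := ENNReal.lintegral_prod_norm_pow_le (μ := μ) Finset.univ
    (f := fun i α => ((‖W i α‖₊ : ℝ≥0∞)) ^ (n:ℕ)) (fun i _ => hmeas i)
    (p := fun _ => (1:ℝ)/n) hsum (fun i _ => by positivity)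
  have hpow : ∀ (x : ℝ≥0∞), (x ^ (n:ℕ)) ^ ((1:ℝ)/n) = x := by
    intro x
    rw [← ENNReal.rpow_natCast x n, ← ENNReal.rpow_mul, mul_one_div_cancel hn', ENNReal.rpow_one]
  have hold' : (∫⁻ α, ∏ i, ((‖W i α‖₊ : ℝ≥0∞)) ∂μ) ≤
      ∏ i, (∫⁻ α, ((‖W i α‖₊ : ℝ≥0∞)) ^ (n:ℕ) ∂μ) ^ ((1:ℝ)/n) := by
    refine le_trans (le_of_eq ?_) hold
    congr 1; ext α; exact (Finset.prod_congr rfl fun i _ => (hpow _)).symm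
  -- integrability facts
  have hWc : ∀ i, Continuous fun α => ‖W i α‖ ^ n := fun i => ((hW i).norm).pow n
  have hint : ∀ i, Integrable (fun α => ‖W i α‖ ^ n) μ := fun i =>
    (hWc i).integrableOn_Ioc
  have hfin : ∀ i, (∫⁻ α, ((‖W i α‖₊ : ℝ≥0∞)) ^ (n:ℕ) ∂μ) ≠ ⊤ := by
    intro i
    have := (hint i).hasFiniteIntegral
    rw [HasFiniteIntegral] at this
    refine ne_of_lt (lt_of_le_of_lt (le_of_eq ?_) this)
    congr 1; ext α
    rw [← ofReal_norm, ← ENNReal.ofReal_coe_nnreal, coe_nnnorm]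
    rw [← ENNReal.ofReal_pow (norm_nonneg _)]
    congr 1
    simp [abs_of_nonneg (pow_nonneg (norm_nonneg _) n)]
  -- convert each side
  have hL : (∫ α in Set.Ioc (0:ℝ) 1, ∏ i, ‖W i α‖) =
      (∫⁻ α, ∏ i, ((‖W i α‖₊ : ℝ≥0∞)) ∂μ).toReal := by
    rw [integral_eq_lintegral_of_nonneg_ae]
    · congr 1
      refine lintegral_congr fun α => ?_
      rw [ENNReal.ofReal_prod_of_nonneg (fun i _ => norm_nonneg _)]
      exact Finset.prod_congr rfl fun i _ => ofReal_norm _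
    · exact Filter.Eventually.of_forall fun α => Finset.prod_nonneg fun i _ => norm_nonneg _
    · exact (continuous_finset_prod _ fun i _ => (hW i).norm).aestronglyMeasurable
  have hR : ∀ i, (∫ α in Set.Ioc (0:ℝ) 1, ‖W i α‖ ^ n) =
      (∫⁻ α, ((‖W i α‖₊ : ℝ≥0∞)) ^ (n:ℕ) ∂μ).toReal := by
    intro i
    rw [integral_eq_lintegral_of_nonneg_ae]
    · congr 1
      refine lintegral_congr fun α => ?_
      rw [ENNReal.ofReal_pow (norm_nonneg _), ← ENNReal.ofReal_coe_nnreal, coe_nnnorm]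
    · exact Filter.Eventually.of_forall fun α => pow_nonneg (norm_nonneg _) n
    · exact (hWc i).aestronglyMeasurable
  rw [hL]
  calc (∫⁻ α, ∏ i, ((‖W i α‖₊ : ℝ≥0∞)) ∂μ).toReal
      ≤ (∏ i, (∫⁻ α, ((‖W i α‖₊ : ℝ≥0∞)) ^ (n:ℕ) ∂μ) ^ ((1:ℝ)/n)).toReal := by
        apply ENNReal.toReal_mono _ hold'
        refine (ENNReal.prod_lt_top fun i _ => ?_).ne
        exact (ENNReal.rpow_lt_top_of_nonneg (by positivity) (hfin i))
    _ = ∏ i, (∫ α in Set.Ioc (0:ℝ) 1, ‖W i α‖ ^ n) ^ ((1:ℝ)/n) := by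
        rw [ENNReal.toReal_prod]
        exact Finset.prod_congr rfl fun i _ => by rw [hR i, ← ENNReal.toReal_rpow]


/-- Hölder bound: for `n ≥ 4`, `lam ≥ 1` and any integer `N ≥ lam^{1/2}`,
`|A_lam[f₁,…,f_n](y)| ≤ (1/r_n(lam)) ∏_i (∫₀¹ |W_i(α,y)|^n dα)^{1/n}`, where
`W_i(α,y) = ∑_{|x| ≤ N} f_i(y - x) e(x² α)`. -/
theorem statement12 (n : ℕ) (hn : 4 ≤ n) (lam : ℕ) (hlam : 1 ≤ lam) (N : ℕ)
    (hN : Real.sqrt lam ≤ (N : ℝ)) (f : Fin n → ℤ → ℂ) (y : ℤ) :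
    ‖mulAvg n lam f y‖ ≤ (sphereCount n lam : ℝ)⁻¹ *
      ∏ i, (∫ α in Set.Ioc (0 : ℝ) 1,
          ‖∑ x ∈ Finset.Icc (-(N : ℤ)) (N : ℤ),
              f i (y - x) * Complex.exp (2 * Real.pi * Complex.I * (x : ℂ) ^ 2 * (α : ℂ))‖ ^ n)
        ^ ((1 : ℝ) / n) := by
  have hNlam : (lam:ℤ) ≤ (N:ℤ)^2 := by
    have h1 : (lam:ℝ) ≤ (N:ℝ)^2 := by
      have h2 := Real.sq_sqrt (by positivity : (0:ℝ) ≤ (lam:ℝ))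
      nlinarith [Real.sqrt_nonneg (lam:ℝ)]
    exact_mod_cast h1
  rw [mulAvg, norm_mul, norm_inv, Complex.norm_natCast]
  refine mul_le_mul_of_nonneg_left ?_ (inv_nonneg.mpr (Nat.cast_nonneg _))
  rw [key_identity n lam N hNlam f y]
  set W : Fin n → ℝ → ℂ := fun i α => ∑ x ∈ Finset.Icc (-(N:ℤ)) (N:ℤ),
      f i (y - x) * Complex.exp (2 * Real.pi * Complex.I * (x:ℂ)^2 * (α:ℂ)) with hWdef
  have hWcont : ∀ i, Continuous (W i) := by
    intro i
    apply continuous_finset_sum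
    intro x _
    exact continuous_const.mul (Complex.continuous_exp.comp (by continuity))
  calc ‖∫ α in Set.Ioc (0:ℝ) 1, (∏ i, W i α) *
          Complex.exp (-(2 * Real.pi * Complex.I * (lam:ℂ) * (α:ℂ)))‖
      ≤ ∫ α in Set.Ioc (0:ℝ) 1, ‖(∏ i, W i α) *
          Complex.exp (-(2 * Real.pi * Complex.I * (lam:ℂ) * (α:ℂ)))‖ :=
        norm_integral_le_integral_norm _
    _ = ∫ α in Set.Ioc (0:ℝ) 1, ∏ i, ‖W i α‖ := by
        refine integral_congr_ae (Filter.Eventually.of_forall fun α => ?_)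
        dsimp only
        rw [norm_mul, norm_prod]
        have hre : (-(2 * (Real.pi:ℂ) * Complex.I * (lam:ℂ) * (α:ℂ))).re = 0 := by
          simp
        rw [Complex.norm_exp, hre, Real.exp_zero, mul_one]
    _ ≤ ∏ i, (∫ α in Set.Ioc (0:ℝ) 1, ‖W i α‖ ^ n) ^ ((1:ℝ)/n) :=
        holder_bound n (by omega) W hWcont
end
end
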